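/- Let γ ∈ (1,∞) and let n : ℕ → ℕ satisfy n(N) ≥ N + 1 for all N and n(N)/N → γ as N → ∞. Then there exist a constant C > 0 and an integer N₀ such that for all N ≥ N₀: |ν⁻_{n(N),N} − ν⁻_{n(N)−1,N−1}| ≤ C·N^{−1/3}·τ⁻_{n(N)−1,N−1} and |τ⁻_{n(N),N} / τ⁻_{n(N)−1,N−1} − 1| ≤ C/N. -/
import Mathlib


open Real Filter

/-- μ⁻_{m,k} = (√(m−1/2) − √(k−1/2))². -/
noncomputable def muMinus (m k : ℝ) : ℝ :=
  (Real.sqrt (m - 1 / 2) - Real.sqrt (k - 1 / 2)) ^ 2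

/-- σ⁻_{m,k} = (√(m−1/2) − √(k−1/2)) · (1/√(k−1/2) − 1/√(m−1/2))^{1/3}. -/
noncomputable def sigMinus (m k : ℝ) : ℝ :=
  (Real.sqrt (m - 1 / 2) - Real.sqrt (k - 1 / 2)) *
    (1 / Real.sqrt (k - 1 / 2) - 1 / Real.sqrt (m - 1 / 2)) ^ ((1 : ℝ) / 3)

/-- τ⁻_{m,k} = σ⁻_{m,k} / μ⁻_{m,k}. -/
noncomputable def tauMinus (m k : ℝ) : ℝ := sigMinus m k / muMinus m k

/-- ν⁻_{m,k} = log μ⁻_{m,k} + (τ⁻_{m,k})²/8. -/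
noncomputable def nuMinus (m k : ℝ) : ℝ :=
  Real.log (muMinus m k) + (tauMinus m k) ^ 2 / 8

set_option maxHeartbeats 1000000

lemma cube_close {x : ℝ} (hx : 0 ≤ x) : |x ^ ((1:ℝ)/3) - 1| ≤ |x - 1| := by
  have hy : 0 ≤ x ^ ((1:ℝ)/3) := Real.rpow_nonneg hx _
  have hxy : (x ^ ((1:ℝ)/3)) ^ (3:ℕ) = x := by
    rw [← Real.rpow_natCast (x ^ ((1:ℝ)/3)) 3, ← Real.rpow_mul hx]
    norm_num
  set y := x ^ ((1:ℝ)/3) with hy'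
  rcases le_total y 1 with h | h
  · have hx1 : x ≤ 1 := by rw [← hxy]; exact pow_le_one₀ hy h
    rw [abs_of_nonpos (by linarith), abs_of_nonpos (by linarith)]
    nlinarith only [sq_nonneg y, hxy, h, hy]
  · have hx1 : 1 ≤ x := by rw [← hxy]; exact one_le_pow₀ h
    rw [abs_of_nonneg (by linarith), abs_of_nonneg (by linarith)]
    nlinarith only [sq_nonneg y, hxy, h, hy]

lemma rpow_third {q : ℝ} (hq : 0 ≤ q) (j i : ℕ) (h : (j:ℝ) = 3*(i:ℝ)) :
    (q ^ j) ^ ((1:ℝ)/3) = q ^ i := by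
  rw [← Real.rpow_natCast q j, ← Real.rpow_mul hq, ← Real.rpow_natCast q i]
  congr 1
  rw [h]; ring

lemma tau_repr (M K : ℝ) (hK : (0:ℝ) < K - 1/2) (hMK : K < M) :
    tauMinus M K = (1 / (Real.sqrt (M - 1/2) * Real.sqrt (K - 1/2) *
      (Real.sqrt (M - 1/2) - Real.sqrt (K - 1/2))^2)) ^ ((1:ℝ)/3) := by
  set a := Real.sqrt (M - 1/2) with ha'
  set b := Real.sqrt (K - 1/2) with hb'
  have hb : 0 < b := Real.sqrt_pos.2 hK
  have hab : b < a := by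
    apply Real.sqrt_lt_sqrt hK.le; linarith
  have ha : 0 < a := lt_trans hb hab
  have hD : 0 < a - b := by linarith
  have h1 : 1/b - 1/a = (a-b)/(a*b) := by
    field_simp
  have h3 : (1:ℝ)/(a*b*(a-b)^2) = ((a-b)/(a*b)) / ((a-b)^(3:ℕ)) := by
    rw [div_div, div_eq_div_iff (by positivity) (by positivity)]
    ring
  have hcube : ((a-b)^(3:ℕ) : ℝ) ^ ((1:ℝ)/3) = a - b := by
    rw [← Real.rpow_natCast (a-b) 3, ← Real.rpow_mul hD.le]
    norm_num
  have h4 : (1/(a*b*(a-b)^2) : ℝ) ^ ((1:ℝ)/3)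
      = ((a-b)/(a*b)) ^ ((1:ℝ)/3) / (a-b) := by
    rw [h3, Real.div_rpow (by positivity) (by positivity), hcube]
  unfold tauMinus sigMinus muMinus
  rw [← ha', ← hb', h1, h4, sq, mul_div_mul_left _ _ hD.ne']

lemma key (γ M K c P Cs : ℝ) (hγ : 1 < γ)
    (hcdef : c = (γ-1)/(12*γ)) (hPdef : P = 3*γ)
    (hCs : Cs = 2*P^2*(1/c + 1/(4*c^2)) + 4*P^3/c^3)
    (hK : 4 ≤ K) (hMK : K + 1 ≤ M)
    (hlo : (γ+1)/2*K ≤ M) (hhi : M ≤ 2*γ*K) :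
    |nuMinus M K - nuMinus (M-1) (K-1)|
        ≤ Cs * K ^ (-(1:ℝ)/3) * tauMinus (M-1) (K-1) ∧
    |tauMinus M K / tauMinus (M-1) (K-1) - 1| ≤ Cs / K := by
  have hγ0 : 0 < γ := by linarith
  have hc : 0 < c := by rw [hcdef]; exact div_pos (by linarith) (by linarith)
  have hc1 : c ≤ 1 := by
    rw [hcdef, div_le_one (by linarith)]; linarith
  have hP : 0 < P := by rw [hPdef]; linarith
  have hP1 : 1 ≤ P := by rw [hPdef]; linarith
  have hK0 : (0:ℝ) < K := by linarith
  set a := Real.sqrt (M - 1/2) with hadef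
  set b := Real.sqrt (K - 1/2) with hbdef
  set a1 := Real.sqrt (M - 3/2) with ha1def
  set b1 := Real.sqrt (K - 3/2) with hb1def
  have hKM : K < M := by linarith
  have hb1 : 0 < b1 := Real.sqrt_pos.2 (by linarith)
  have hbb1 : b1 ≤ b := Real.sqrt_le_sqrt (by linarith)
  have hba1 : b ≤ a1 := Real.sqrt_le_sqrt (by linarith)
  have ha1a : a1 ≤ a := Real.sqrt_le_sqrt (by linarith)
  have hb : 0 < b := lt_of_lt_of_le hb1 hbb1
  have ha1 : 0 < a1 := lt_of_lt_of_le hb hba1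
  have ha : 0 < a := lt_of_lt_of_le ha1 ha1a
  have hasq : a^2 = M - 1/2 := Real.sq_sqrt (by linarith)
  have hbsq : b^2 = K - 1/2 := Real.sq_sqrt (by linarith)
  have ha1sq : a1^2 = M - 3/2 := Real.sq_sqrt (by linarith)
  have hb1sq : b1^2 = K - 3/2 := Real.sq_sqrt (by linarith)
  have hmu : muMinus M K = (a-b)^2 := by
    unfold muMinus; rw [← hadef, ← hbdef]
  have hmu1 : muMinus (M-1) (K-1) = (a1-b1)^2 := by
    unfold muMinus
    rw [(by ring : M - 1 - 1/2 = M - 3/2), (by ring : K - 1 - 1/2 = K - 3/2),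
      ← ha1def, ← hb1def]
  have htau : tauMinus M K = (1/(a*b*(a-b)^2)) ^ ((1:ℝ)/3) := by
    rw [tau_repr M K (by linarith) hKM, ← hadef, ← hbdef]
  have htau1 : tauMinus (M-1) (K-1) = (1/(a1*b1*(a1-b1)^2)) ^ ((1:ℝ)/3) := by
    have h := tau_repr (M-1) (K-1) (by linarith) (by linarith)
    rw [(by ring : M - 1 - 1/2 = M - 3/2), (by ring : K - 1 - 1/2 = K - 3/2)] at h
    rw [h, ← ha1def, ← hb1def]
  clear_value a b a1 b1
  have hb1one : 1 ≤ b1 := by nlinarith only [hb1sq, hb1, hK]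
  have hb1K : b1^2 ≤ K := by linarith only [hb1sq]
  have hKb1 : K ≤ 4*b1^2 := by linarith only [hb1sq, hK]
  have haPsq : a^2 ≤ P^2*b1^2 := by
    rw [hPdef]
    nlinarith only [hasq, hhi, hγ0, hKb1, hγ,
      mul_nonneg hγ0.le (by linarith only [hKb1] : (0:ℝ) ≤ 4*b1^2 - K),
      mul_nonneg (mul_nonneg hγ0.le (by linarith : (0:ℝ) ≤ 9*γ - 8)) (sq_nonneg b1)]
  have haP : a ≤ P*b1 := by
    nlinarith only [haPsq, mul_pos hP hb1, ha]
  have hbP : b ≤ P*b1 := le_trans (le_trans hba1 ha1a) haP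
  have ha1P : a1 ≤ P*b1 := le_trans ha1a haP
  have hb1P : b1 ≤ P*b1 := le_mul_of_one_le_left hb1.le hP1
  have haa1 : (a - a1)*(a + a1) = 1 := by linear_combination hasq - ha1sq
  have hbb1e : (b - b1)*(b + b1) = 1 := by linear_combination hbsq - hb1sq
  have haa1nn : 0 ≤ a - a1 := by linarith only [ha1a]
  have hbb1nn : 0 ≤ b - b1 := by linarith only [hbb1]
  have haa1le : a - a1 ≤ 1/(2*b1) := by
    rw [le_div_iff₀ (by linarith only [hb1] : (0:ℝ) < 2*b1)]
    nlinarith only [haa1, mul_nonneg haa1nn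
      (by linarith only [hbb1, hba1, ha1a] : (0:ℝ) ≤ a + a1 - 2*b1)]
  have hbb1le : b - b1 ≤ 1/(2*b1) := by
    rw [le_div_iff₀ (by linarith only [hb1] : (0:ℝ) < 2*b1)]
    nlinarith only [hbb1e, mul_nonneg hbb1nn
      (by linarith only [hbb1] : (0:ℝ) ≤ b + b1 - 2*b1)]
  have hD : 0 < a - b := by nlinarith only [hasq, hbsq, ha, hb, hKM]
  have hD1 : 0 < a1 - b1 := by nlinarith only [ha1sq, hb1sq, ha1, hb1, hKM]
  have hDD1le : (a1 - b1) - (a - b) ≤ 1/(2*b1) := by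
    linarith only [hbb1le, haa1nn]
  have hDle : a - b ≤ a1 - b1 := by
    nlinarith only [haa1, hbb1e, add_pos ha ha1,
      mul_nonneg hbb1nn (by linarith only [ha1a, hba1, hbb1] : (0:ℝ) ≤ (a+a1)-(b+b1))]
  have hDprod : (a-b)*(a+b) = M - K := by linear_combination hasq - hbsq
  have hD1prod : (a1-b1)*(a1+b1) = M - K := by linear_combination ha1sq - hb1sq
  have h2P : (0:ℝ) < 2*P := by linarith only [hP]
  have h2Pb1 : (0:ℝ) < 2*P*b1 := by
    have := mul_pos h2P hb1; linarith only [this]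
  have hDlow : c*b1 ≤ a - b := by
    have h5 : c*(2*P) = (γ-1)/2 := by rw [hcdef, hPdef]; field_simp; ring
    have h6 : c*b1*(2*P*b1) ≤ (a-b)*(2*P*b1) := by
      calc c*b1*(2*P*b1) = (c*(2*P))*b1^2 := by ring
        _ = (γ-1)/2*b1^2 := by rw [h5]
        _ ≤ (γ-1)/2*K := by
            nlinarith only [mul_nonneg (by linarith only [hγ] : (0:ℝ) ≤ (γ-1)/2)
              (by linarith only [hb1K] : (0:ℝ) ≤ K - b1^2)]
        _ ≤ M - K := by linarith only [hlo, hγ, hK0]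
        _ = (a-b)*(a+b) := hDprod.symm
        _ ≤ (a-b)*(2*P*b1) := by
            nlinarith only [mul_nonneg hD.le (by linarith only [haP, hbP] : (0:ℝ) ≤ 2*P*b1 - (a+b))]
    exact le_of_mul_le_mul_right h6 h2Pb1
  have hD1low : c*b1 ≤ a1 - b1 := by
    have h5 : c*(2*P) = (γ-1)/2 := by rw [hcdef, hPdef]; field_simp; ring
    have h6 : c*b1*(2*P*b1) ≤ (a1-b1)*(2*P*b1) := by
      calc c*b1*(2*P*b1) = (c*(2*P))*b1^2 := by ring
        _ = (γ-1)/2*b1^2 := by rw [h5]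
        _ ≤ (γ-1)/2*K := by
            nlinarith only [mul_nonneg (by linarith only [hγ] : (0:ℝ) ≤ (γ-1)/2)
              (by linarith only [hb1K] : (0:ℝ) ≤ K - b1^2)]
        _ ≤ M - K := by linarith only [hlo, hγ, hK0]
        _ = (a1-b1)*(a1+b1) := hD1prod.symm
        _ ≤ (a1-b1)*(2*P*b1) := by
            nlinarith only [mul_nonneg hD1.le (by linarith only [ha1P, hb1P] : (0:ℝ) ≤ 2*P*b1 - (a1+b1))]
    exact le_of_mul_le_mul_right h6 h2Pb1
  have hDup : a - b ≤ P*b1 := by linarith only [haP, hb]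
  have hD1up : a1 - b1 ≤ P*b1 := by linarith only [ha1P, hb1]
  -- products
  have hXpos : 0 < a*b*(a-b)^2 := mul_pos (mul_pos ha hb) (pow_pos hD 2)
  have hX1pos : 0 < a1*b1*(a1-b1)^2 := mul_pos (mul_pos ha1 hb1) (pow_pos hD1 2)
  have hcb1nn : (0:ℝ) ≤ c*b1 := mul_nonneg hc.le hb1.le
  have hPb1nn : (0:ℝ) ≤ P*b1 := mul_nonneg hP.le hb1.le
  have hXlo : c^3*b1^4 ≤ a*b*(a-b)^2 := by
    have e1 : b1*b1 ≤ a*b := mul_le_mul (by linarith only [hbb1, hba1, ha1a]) hbb1 hb1.le ha.le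
    have e2 : (c*b1)^2 ≤ (a-b)^2 := pow_le_pow_left₀ hcb1nn hDlow 2
    have e3 : (b1*b1)*((c*b1)^2) ≤ (a*b)*((a-b)^2) :=
      mul_le_mul e1 e2 (sq_nonneg _) (mul_nonneg ha.le hb.le)
    nlinarith only [e3, mul_nonneg (mul_nonneg (sq_nonneg c)
      (by linarith only [hc1] : (0:ℝ) ≤ 1 - c)) (pow_nonneg hb1.le 4)]
  have hX1lo : c^3*b1^4 ≤ a1*b1*(a1-b1)^2 := by
    have e1 : b1*b1 ≤ a1*b1 :=
      mul_le_mul_of_nonneg_right (by linarith only [hbb1, hba1]) hb1.le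
    have e2 : (c*b1)^2 ≤ (a1-b1)^2 := pow_le_pow_left₀ hcb1nn hD1low 2
    have e3 : (b1*b1)*((c*b1)^2) ≤ (a1*b1)*((a1-b1)^2) :=
      mul_le_mul e1 e2 (sq_nonneg _) (mul_nonneg ha1.le hb1.le)
    nlinarith only [e3, mul_nonneg (mul_nonneg (sq_nonneg c)
      (by linarith only [hc1] : (0:ℝ) ≤ 1 - c)) (pow_nonneg hb1.le 4)]
  have hP2m1 : (0:ℝ) ≤ P^2 - 1 := by nlinarith only [hP1]
  have hXhi : a*b*(a-b)^2 ≤ P^6*b1^4 := by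
    have e1 : a*b ≤ (P*b1)*(P*b1) := mul_le_mul haP hbP hb.le hPb1nn
    have e2 : (a-b)^2 ≤ (P*b1)^2 := pow_le_pow_left₀ hD.le hDup 2
    have e3 : (a*b)*((a-b)^2) ≤ ((P*b1)*(P*b1))*((P*b1)^2) :=
      mul_le_mul e1 e2 (sq_nonneg _) (mul_nonneg hPb1nn hPb1nn)
    nlinarith only [e3, mul_nonneg (mul_nonneg (pow_nonneg hP.le 4) hP2m1)
      (pow_nonneg hb1.le 4)]
  have hX1hi : a1*b1*(a1-b1)^2 ≤ P^6*b1^4 := by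
    have e1 : a1*b1 ≤ (P*b1)*(P*b1) := mul_le_mul ha1P hb1P hb1.le hPb1nn
    have e2 : (a1-b1)^2 ≤ (P*b1)^2 := pow_le_pow_left₀ hD1.le hD1up 2
    have e3 : (a1*b1)*((a1-b1)^2) ≤ ((P*b1)*(P*b1))*((P*b1)^2) :=
      mul_le_mul e1 e2 (sq_nonneg _) (mul_nonneg hPb1nn hPb1nn)
    nlinarith only [e3, mul_nonneg (mul_nonneg (pow_nonneg hP.le 4) hP2m1)
      (pow_nonneg hb1.le 4)]
  -- rpow objects
  set T := ((b1^(4:ℕ) : ℝ)) ^ ((1:ℝ)/3) with hTdef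
  set U := ((b1^(2:ℕ) : ℝ)) ^ ((1:ℝ)/3) with hUdef
  have hT : 0 < T := Real.rpow_pos_of_pos (pow_pos hb1 4) _
  have hU : 0 < U := Real.rpow_pos_of_pos (pow_pos hb1 2) _
  have hUT : U*T = b1^2 := by
    rw [hTdef, hUdef, ← Real.mul_rpow (pow_nonneg hb1.le 2) (pow_nonneg hb1.le 4),
      (by ring : (b1^(2:ℕ):ℝ) * b1^(4:ℕ) = b1^(6:ℕ)), rpow_third hb1.le 6 2 (by norm_num)]
  have hTb1 : b1 ≤ T := by
    have h1 : (b1^(3:ℕ):ℝ) ^ ((1:ℝ)/3) ≤ T := by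
      rw [hTdef]
      exact Real.rpow_le_rpow (pow_nonneg hb1.le 3)
        (pow_le_pow_right₀ hb1one (by norm_num)) (by norm_num)
    rwa [rpow_third hb1.le 3 1 (by norm_num), pow_one] at h1
  have htau1pos : 0 < tauMinus (M-1) (K-1) := by
    rw [htau1]; exact Real.rpow_pos_of_pos (one_div_pos.2 hX1pos) _
  have htaupos : 0 < tauMinus M K := by
    rw [htau]; exact Real.rpow_pos_of_pos (one_div_pos.2 hXpos) _
  have hc3b4 : (0:ℝ) < c^3*b1^4 := mul_pos (pow_pos hc 3) (pow_pos hb1 4)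
  have hP6b4 : (0:ℝ) < P^6*b1^4 := mul_pos (pow_pos hP 6) (pow_pos hb1 4)
  have hcompute1 : ((1:ℝ)/(c^3*b1^4)) ^ ((1:ℝ)/3) = 1/(c*T) := by
    rw [one_div, Real.inv_rpow hc3b4.le,
      Real.mul_rpow (pow_nonneg hc.le 3) (pow_nonneg hb1.le 4),
      (by norm_num : (c^3 : ℝ) = c^(3:ℕ)), rpow_third hc.le 3 1 (by norm_num), pow_one,
      (by norm_num : (b1^4 : ℝ) = b1^(4:ℕ)), ← hTdef, one_div]
  have hcompute2 : ((1:ℝ)/(P^6*b1^4)) ^ ((1:ℝ)/3) = 1/(P^2*T) := by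
    rw [one_div, Real.inv_rpow hP6b4.le,
      Real.mul_rpow (pow_nonneg hP.le 6) (pow_nonneg hb1.le 4),
      (by norm_num : (P^6 : ℝ) = P^(6:ℕ)), rpow_third hP.le 6 2 (by norm_num),
      (by norm_num : (b1^4 : ℝ) = b1^(4:ℕ)), ← hTdef, one_div,
      (by norm_num : (P^(2:ℕ) : ℝ) = P^2)]
  have htau1hi : tauMinus (M-1) (K-1) ≤ 1/(c*T) := by
    rw [htau1, ← hcompute1]
    exact Real.rpow_le_rpow (one_div_pos.2 hX1pos).le
      (one_div_le_one_div_of_le hc3b4 hX1lo) (by norm_num)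
  have htauhi : tauMinus M K ≤ 1/(c*T) := by
    rw [htau, ← hcompute1]
    exact Real.rpow_le_rpow (one_div_pos.2 hXpos).le
      (one_div_le_one_div_of_le hc3b4 hXlo) (by norm_num)
  have htau1lo : 1/(P^2*T) ≤ tauMinus (M-1) (K-1) := by
    rw [htau1, ← hcompute2]
    exact Real.rpow_le_rpow (one_div_pos.2 hP6b4).le
      (one_div_le_one_div_of_le hX1pos hX1hi) (by norm_num)
  have htau1hib : tauMinus (M-1) (K-1) ≤ 1/(c*b1) :=
    le_trans htau1hi (one_div_le_one_div_of_le (mul_pos hc hb1)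
      (mul_le_mul_of_nonneg_left hTb1 hc.le))
  have htauhib : tauMinus M K ≤ 1/(c*b1) :=
    le_trans htauhi (one_div_le_one_div_of_le (mul_pos hc hb1)
      (mul_le_mul_of_nonneg_left hTb1 hc.le))
  -- log bound
  have hlogb : |Real.log ((a-b)^2) - Real.log ((a1-b1)^2)| ≤ 1/(c*b1^2) := by
    have l1 : Real.log ((a-b)^2) = 2*Real.log (a-b) := by
      rw [Real.log_pow]; push_cast; ring
    have l2 : Real.log ((a1-b1)^2) = 2*Real.log (a1-b1) := by
      rw [Real.log_pow]; push_cast; ring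
    have l3 : Real.log (a-b) ≤ Real.log (a1-b1) := Real.log_le_log hD hDle
    have l4 : Real.log (a1-b1) - Real.log (a-b) ≤ ((a1-b1)-(a-b))/(a-b) := by
      rw [← Real.log_div hD1.ne' hD.ne']
      have l5 := Real.log_le_sub_one_of_pos (div_pos hD1 hD)
      have l6 : (a1-b1)/(a-b) - 1 = ((a1-b1)-(a-b))/(a-b) := by
        field_simp
      linarith only [l5, l6.le, l6.ge]
    have l7 : ((a1-b1)-(a-b))/(a-b) ≤ (1/(2*b1))/(c*b1) :=
      div_le_div₀ (le_of_lt (one_div_pos.2 (by linarith only [hb1] : (0:ℝ) < 2*b1)))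
        hDD1le (mul_pos hc hb1) hDlow
    have l8 : (1/(2*b1))/(c*b1) = 1/(2*c*b1^2) := by
      rw [div_div]; congr 1; ring
    have l9 : 2*(1/(2*c*b1^2)) = 1/(c*b1^2) := by
      rw [mul_one_div, div_eq_div_iff
        (mul_pos (mul_pos (by norm_num : (0:ℝ) < 2) hc) (pow_pos hb1 2)).ne'
        (mul_pos hc (pow_pos hb1 2)).ne']
      ring
    rw [l1, l2, abs_of_nonpos (by linarith only [l3])]
    linarith only [l4, l7, l8.le, l8.ge, l9.le, l9.ge]
  -- tau squared bound
  have htsq : |tauMinus M K^2/8 - tauMinus (M-1) (K-1)^2/8| ≤ (1/(c*b1))^2/4 := by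
    have sq1 : tauMinus M K^2 ≤ (1/(c*b1))^2 := pow_le_pow_left₀ htaupos.le htauhib 2
    have sq2 : tauMinus (M-1) (K-1)^2 ≤ (1/(c*b1))^2 :=
      pow_le_pow_left₀ htau1pos.le htau1hib 2
    rw [abs_le]
    constructor
    · linarith only [sq1, sq2, sq_nonneg (tauMinus M K), sq_nonneg (tauMinus (M-1) (K-1))]
    · linarith only [sq1, sq2, sq_nonneg (tauMinus M K), sq_nonneg (tauMinus (M-1) (K-1))]
  -- assemble part 1
  have habs : |nuMinus M K - nuMinus (M-1) (K-1)| ≤ (1/c + 1/(4*c^2))/b1^2 := by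
    have hν : nuMinus M K - nuMinus (M-1) (K-1)
        = (Real.log ((a-b)^2) - Real.log ((a1-b1)^2))
          + (tauMinus M K^2/8 - tauMinus (M-1) (K-1)^2/8) := by
      unfold nuMinus
      rw [hmu, hmu1]; ring
    rw [hν]
    refine le_trans (abs_add_le _ _) ?_
    have e : 1/(c*b1^2) + (1/(c*b1))^2/4 = (1/c + 1/(4*c^2))/b1^2 := by
      field_simp
    linarith only [hlogb, htsq, e.le, e.ge]
  have h4c2 : (0:ℝ) < 4*c^2 := by positivity
  have hApos : 0 < 1/c + 1/(4*c^2) := add_pos (one_div_pos.2 hc) (one_div_pos.2 h4c2)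
  have hc3 : (0:ℝ) < c^3 := pow_pos hc 3
  have hCs2 : 2*P^2*(1/c + 1/(4*c^2)) ≤ Cs := by
    rw [hCs]
    have h1 : (0:ℝ) ≤ 4*P^3/c^3 :=
      le_of_lt (div_pos (by nlinarith only [pow_pos hP 3] : (0:ℝ) < 4*P^3) hc3)
    linarith only [h1]
  have hCs3 : 4*P^3/c^3 ≤ Cs := by
    rw [hCs]
    have h1 : (0:ℝ) ≤ 2*P^2*(1/c + 1/(4*c^2)) := by
      have := mul_pos (mul_pos (by norm_num : (0:ℝ) < 2) (pow_pos hP 2)) hApos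
      linarith only [this]
    linarith only [h1]
  have hCspos : 0 < Cs :=
    lt_of_lt_of_le (mul_pos (mul_pos (by norm_num : (0:ℝ) < 2) (pow_pos hP 2)) hApos) hCs2
  have hKe : 1/(2*U) ≤ K ^ (-(1:ℝ)/3) := by
    have k13 : (0:ℝ) < K^((1:ℝ)/3) := Real.rpow_pos_of_pos hK0 _
    have r3 : (4:ℝ)^((1:ℝ)/3) ≤ 2 := by
      have h8 : ((2:ℝ)^(3:ℕ))^((1:ℝ)/3) = 2 := by
        rw [rpow_third (by norm_num) 3 1 (by norm_num), pow_one]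
      have h9 := Real.rpow_le_rpow (by norm_num : (0:ℝ) ≤ 4)
        (by norm_num : (4:ℝ) ≤ 2^(3:ℕ)) (by norm_num : (0:ℝ) ≤ 1/3)
      linarith only [h9, h8.le, h8.ge]
    have k8 : K^((1:ℝ)/3) ≤ 2*U := by
      have r1 : K^((1:ℝ)/3) ≤ ((4:ℝ)*b1^(2:ℕ))^((1:ℝ)/3) :=
        Real.rpow_le_rpow hK0.le (by push_cast; linarith only [hKb1]) (by norm_num)
      have r2 : ((4:ℝ)*b1^(2:ℕ))^((1:ℝ)/3) = (4:ℝ)^((1:ℝ)/3)*U := by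
        rw [Real.mul_rpow (by norm_num) (pow_nonneg hb1.le 2), hUdef]
      nlinarith only [hU, r1, r2, r3, mul_nonneg (by linarith only [r3] : (0:ℝ) ≤ 2 - (4:ℝ)^((1:ℝ)/3)) hU.le]
    have hneg : K^(-(1:ℝ)/3) = (K^((1:ℝ)/3))⁻¹ := by
      rw [(by norm_num : -(1:ℝ)/3 = -((1:ℝ)/3)), Real.rpow_neg hK0.le]
    rw [hneg, ← one_div]
    exact one_div_le_one_div_of_le k13 k8
  have hfinal1 : (1/c + 1/(4*c^2))/b1^2 ≤ Cs * K ^ (-(1:ℝ)/3) * tauMinus (M-1) (K-1) := by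
    have hKenn : (0:ℝ) ≤ K ^ (-(1:ℝ)/3) := Real.rpow_nonneg hK0.le _
    have hP2T : (0:ℝ) < P^2*T := mul_pos (pow_pos hP 2) hT
    have step1 : Cs*(1/(2*U))*(1/(P^2*T)) ≤ Cs * K ^ (-(1:ℝ)/3) * tauMinus (M-1) (K-1) := by
      apply mul_le_mul (mul_le_mul_of_nonneg_left hKe hCspos.le) htau1lo
        (le_of_lt (one_div_pos.2 hP2T)) (mul_nonneg hCspos.le hKenn)
    have step2 : Cs*(1/(2*U))*(1/(P^2*T)) = Cs/(2*P^2*b1^2) := by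
      have e1 : (2*U)*(P^2*T) = 2*P^2*b1^2 := by
        rw [← hUT]; ring
      rw [← e1]
      field_simp
    have step3 : (1/c + 1/(4*c^2))/b1^2 ≤ Cs/(2*P^2*b1^2) := by
      rw [div_le_div_iff₀ (pow_pos hb1 2)
        (mul_pos (mul_pos (by norm_num : (0:ℝ) < 2) (pow_pos hP 2)) (pow_pos hb1 2))]
      nlinarith only [mul_le_mul_of_nonneg_right hCs2 (sq_nonneg b1)]
    linarith only [step1, step2.le, step2.ge, step3]
  refine ⟨le_trans habs hfinal1, ?_⟩
  -- part 2
  have hRnn : (0:ℝ) ≤ (a1*b1*(a1-b1)^2)/(a*b*(a-b)^2) :=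
    le_of_lt (div_pos hX1pos hXpos)
  have hRrepr : tauMinus M K / tauMinus (M-1) (K-1)
      = ((a1*b1*(a1-b1)^2)/(a*b*(a-b)^2)) ^ ((1:ℝ)/3) := by
    rw [htau, htau1, ← Real.div_rpow (one_div_pos.2 hXpos).le (one_div_pos.2 hX1pos).le]
    congr 1
    field_simp
  have h2b1 : (0:ℝ) < 2*b1 := by linarith only [hb1]
  have hXdiff : |a1*b1*(a1-b1)^2 - a*b*(a-b)^2| ≤ P^3*b1^2 := by
    have hid : a1*b1*(a1-b1)^2 - a*b*(a-b)^2
        = -((a - a1)*(b*(a-b)^2)) - a1*((b - b1)*(a-b)^2)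
          + (a1*b1)*(((a1-b1) - (a-b))*((a1-b1)+(a-b))) := by ring
    have ht1nn : 0 ≤ (a - a1)*(b*(a-b)^2) :=
      mul_nonneg haa1nn (mul_nonneg hb.le (sq_nonneg _))
    have ht2nn : 0 ≤ a1*((b - b1)*(a-b)^2) :=
      mul_nonneg ha1.le (mul_nonneg hbb1nn (sq_nonneg _))
    have ht3nn : 0 ≤ (a1*b1)*(((a1-b1) - (a-b))*((a1-b1)+(a-b))) :=
      mul_nonneg (mul_nonneg ha1.le hb1.le)
        (mul_nonneg (by linarith only [hDle]) (by linarith only [hD, hD1]))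
    have ht1ub : (a - a1)*(b*(a-b)^2) ≤ (1/(2*b1))*((P*b1)*(P*b1)^2) :=
      mul_le_mul haa1le
        (mul_le_mul hbP (pow_le_pow_left₀ hD.le hDup 2) (sq_nonneg _) hPb1nn)
        (mul_nonneg hb.le (sq_nonneg _)) (le_of_lt (one_div_pos.2 h2b1))
    have ht2ub : a1*((b - b1)*(a-b)^2) ≤ (P*b1)*((1/(2*b1))*(P*b1)^2) :=
      mul_le_mul ha1P
        (mul_le_mul hbb1le (pow_le_pow_left₀ hD.le hDup 2) (sq_nonneg _)
          (le_of_lt (one_div_pos.2 h2b1)))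
        (mul_nonneg hbb1nn (sq_nonneg _)) hPb1nn
    have ht3ub : (a1*b1)*(((a1-b1) - (a-b))*((a1-b1)+(a-b)))
        ≤ ((P*b1)*(P*b1))*((1/(2*b1))*((P*b1)+(P*b1))) :=
      mul_le_mul (mul_le_mul ha1P hb1P hb1.le hPb1nn)
        (mul_le_mul hDD1le (add_le_add hD1up hDup) (by linarith only [hD, hD1])
          (le_of_lt (one_div_pos.2 h2b1)))
        (mul_nonneg (by linarith only [hDle]) (by linarith only [hD, hD1]))
        (mul_nonneg hPb1nn hPb1nn)
    have ev1 : (1/(2*b1))*((P*b1)*(P*b1)^2) = P^3*b1^2/2 := by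
      field_simp
    have ev2 : (P*b1)*((1/(2*b1))*(P*b1)^2) = P^3*b1^2/2 := by
      field_simp
    have ev3 : ((P*b1)*(P*b1))*((1/(2*b1))*((P*b1)+(P*b1))) = P^3*b1^2 := by
      field_simp
      ring
    rw [abs_le]
    constructor
    · rw [hid]
      linarith only [ht1ub, ht2ub, ht3nn, ev1.le, ev1.ge, ev2.le, ev2.ge]
    · rw [hid]
      linarith only [ht1nn, ht2nn, ht3ub, ev3.le, ev3.ge]
  have hRbound : |(a1*b1*(a1-b1)^2)/(a*b*(a-b)^2) - 1| ≤ (4*P^3/c^3)/K := by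
    have e1 : (a1*b1*(a1-b1)^2)/(a*b*(a-b)^2) - 1
        = (a1*b1*(a1-b1)^2 - a*b*(a-b)^2)/(a*b*(a-b)^2) := by
      field_simp
    rw [e1, abs_div, abs_of_pos hXpos]
    have e2 : |a1*b1*(a1-b1)^2 - a*b*(a-b)^2| / (a*b*(a-b)^2)
        ≤ (P^3*b1^2)/(c^3*b1^4) :=
      div_le_div₀ (mul_nonneg (pow_nonneg hP.le 3) (pow_nonneg hb1.le 2))
        hXdiff hc3b4 hXlo
    have e3 : (P^3*b1^2)/(c^3*b1^4) ≤ (4*P^3/c^3)/K := by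
      have e4 : (P^3*b1^2)/(c^3*b1^4) = (P^3/c^3)/b1^2 := by
        field_simp
      have h5 : (0:ℝ) ≤ P^3/c^3 := le_of_lt (div_pos (pow_pos hP 3) hc3)
      have e5 : 4*P^3/c^3 = 4*(P^3/c^3) := by ring
      rw [e4, e5]
      set w := P^3/c^3 with hwdef
      rw [div_le_div_iff₀ (pow_pos hb1 2) hK0]
      nlinarith only [mul_le_mul_of_nonneg_left hKb1 h5]
    linarith only [e2, e3]
  calc |tauMinus M K / tauMinus (M-1) (K-1) - 1|
      = |((a1*b1*(a1-b1)^2)/(a*b*(a-b)^2)) ^ ((1:ℝ)/3) - 1| := by rw [hRrepr]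
    _ ≤ |(a1*b1*(a1-b1)^2)/(a*b*(a-b)^2) - 1| := cube_close hRnn
    _ ≤ (4*P^3/c^3)/K := hRbound
    _ ≤ Cs/K := (div_le_div_iff_of_pos_right hK0).2 hCs3

theorem stmt_12 (γ : ℝ) (hγ : 1 < γ) (n : ℕ → ℕ) (hn : ∀ N, N + 1 ≤ n N)
    (hlim : Tendsto (fun N : ℕ => (n N : ℝ) / (N : ℝ)) atTop (nhds γ)) :
    ∃ C > 0, ∃ N₀ : ℕ, ∀ N ≥ N₀,
      |nuMinus (n N : ℝ) (N : ℝ) - nuMinus ((n N : ℝ) - 1) ((N : ℝ) - 1)|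
          ≤ C * (N : ℝ) ^ (-(1 : ℝ) / 3) * tauMinus ((n N : ℝ) - 1) ((N : ℝ) - 1) ∧
      |tauMinus (n N : ℝ) (N : ℝ) / tauMinus ((n N : ℝ) - 1) ((N : ℝ) - 1) - 1|
          ≤ C / N := by
  set c := (γ-1)/(12*γ) with hcdef
  set P := 3*γ with hPdef
  have hγ0 : 0 < γ := by linarith
  have hc : 0 < c := div_pos (by linarith) (by linarith)
  have hP : 0 < P := by rw [hPdef]; linarith
  have hApos : 0 < 1/c + 1/(4*c^2) :=
    add_pos (one_div_pos.2 hc)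
      (one_div_pos.2 (mul_pos (by norm_num : (0:ℝ) < 4) (pow_pos hc 2)))
  have hCpos : 0 < 2*P^2*(1/c + 1/(4*c^2)) + 4*P^3/c^3 :=
    add_pos (mul_pos (mul_pos (by norm_num : (0:ℝ) < 2) (pow_pos hP 2)) hApos)
      (div_pos (mul_pos (by norm_num : (0:ℝ) < 4) (pow_pos hP 3)) (pow_pos hc 3))
  refine ⟨2*P^2*(1/c + 1/(4*c^2)) + 4*P^3/c^3, hCpos, ?_⟩
  have h1 : ∀ᶠ N : ℕ in atTop, (n N : ℝ)/(N:ℝ) < 2*γ :=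
    hlim.eventually_lt_const (by linarith)
  have h2 : ∀ᶠ N : ℕ in atTop, (γ+1)/2 < (n N : ℝ)/(N:ℝ) :=
    hlim.eventually_const_lt (by linarith)
  have h3 : ∀ᶠ N : ℕ in atTop, 4 ≤ N := eventually_ge_atTop 4
  have hev : ∀ᶠ N : ℕ in atTop,
      |nuMinus (n N : ℝ) (N : ℝ) - nuMinus ((n N : ℝ) - 1) ((N : ℝ) - 1)|
          ≤ (2*P^2*(1/c + 1/(4*c^2)) + 4*P^3/c^3) * (N : ℝ) ^ (-(1 : ℝ) / 3)
            * tauMinus ((n N : ℝ) - 1) ((N : ℝ) - 1) ∧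
      |tauMinus (n N : ℝ) (N : ℝ) / tauMinus ((n N : ℝ) - 1) ((N : ℝ) - 1) - 1|
          ≤ (2*P^2*(1/c + 1/(4*c^2)) + 4*P^3/c^3) / N := by
    filter_upwards [h1, h2, h3] with N hub hlb hN4
    have hN4' : (4:ℝ) ≤ (N:ℝ) := by exact_mod_cast hN4
    have hN0 : (0:ℝ) < (N:ℝ) := by linarith
    have hhi : (n N:ℝ) ≤ 2*γ*(N:ℝ) := by
      rw [div_lt_iff₀ hN0] at hub; linarith
    have hlo : (γ+1)/2*(N:ℝ) ≤ (n N:ℝ) := by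
      rw [lt_div_iff₀ hN0] at hlb; linarith
    have hMK : (N:ℝ) + 1 ≤ (n N:ℝ) := by exact_mod_cast hn N
    exact key γ (n N) N c P _ hγ hcdef hPdef rfl hN4' hMK hlo hhi
  rw [eventually_atTop] at hev
  obtain ⟨N₀, hN₀⟩ := hev
  exact ⟨N₀, hN₀⟩
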